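/- arXiv:1004.1492 — 5 statements merged into one kernel-verified Lean document; each statement's English description precedes it below -/
import Mathlib

section
/- Let R be a commutative ring that is an algebra over ℚ, let ∂ : R → R be a derivation (an additive map satisfying ∂(xy) = ∂(x)y + x∂(y)), and let I be an ideal of R that is stable under ∂ (i.e. ∂(I) ⊆ I). Then the radical √I of I is also stable under ∂, i.e. for every a ∈ √I one has ∂(a) ∈ √I. -/
/-!
If `a ^ n ∈ I`, then `a ^ i * (D a) ^ (2 * k) ∈ I` whenever `i + k = n`, by induction on `k`:
applying `D` to `x = a ^ (i + 1) * (D a) ^ (2 * k) ∈ I` and multiplying by `D a` gives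
`(i + 1) * a ^ i * (D a) ^ (2 * k + 2) + 2 * k * D (D a) * x ∈ I`, and `i + 1` is invertible
in a `ℚ`-algebra. For `k = n` this says `(D a) ^ (2 * n) ∈ I`.
-/

def Derivation.ofLeibniz {R : Type*} [CommRing R] (D : R → R)
    (hadd : ∀ x y : R, D (x + y) = D x + D y)
    (hleib : ∀ x y : R, D (x * y) = D x * y + x * D y) : Derivation ℤ R R :=
  Derivation.mk' (AddMonoidHom.mk' D hadd).toIntLinearMap fun x y => by
    simp [hleib, add_comm, mul_comm]

theorem Ideal.mem_of_natCast_mul_mem {R : Type*} [CommRing R] [Algebra ℚ R] {I : Ideal R}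
    {n : ℕ} (hn : n ≠ 0) {y : R} (h : (n : R) * y ∈ I) : y ∈ I := by
  have hy : y = (n : ℚ)⁻¹ • ((n : R) * y) := by
    rw [← nsmul_eq_mul, ← Nat.cast_smul_eq_nsmul ℚ, inv_smul_smul₀ (Nat.cast_ne_zero.2 hn)]
  rw [hy]
  exact Submodule.smul_of_tower_mem I _ h

namespace Derivation

variable {A R : Type*} [CommSemiring A] [CommRing R] [Algebra A R] (D : Derivation A R R)

theorem map_pow_succ (a : R) (n : ℕ) : D (a ^ (n + 1)) = (n + 1) * a ^ n * D a := by
  simp [leibniz_pow, nsmul_eq_mul, mul_assoc]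

theorem mul_map_pow (c : R) (n : ℕ) : c * D (c ^ n) = n * c ^ n * D c := by
  cases n with
  | zero => simp
  | succ n => rw [map_pow_succ]; push_cast; ring

variable [Algebra ℚ R] {I : Ideal R}

theorem pow_mul_map_sq_pow_mem_of_succ (hI : ∀ x ∈ I, D x ∈ I) {a : R} {i k : ℕ}
    (hx : a ^ (i + 1) * D a ^ (2 * k) ∈ I) : a ^ i * D a ^ (2 * (k + 1)) ∈ I := by
  have hDx : D a * D (a ^ (i + 1) * D a ^ (2 * k)) =
      ((i + 1 : ℕ) : R) * (a ^ i * D a ^ (2 * (k + 1))) +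
        2 * k * D (D a) * (a ^ (i + 1) * D a ^ (2 * k)) := by
    rw [leibniz, smul_eq_mul, smul_eq_mul, map_pow_succ]
    have hsq := D.mul_map_pow (D a) (2 * k)
    push_cast at hsq ⊢
    linear_combination a ^ (i + 1) * hsq
  refine Ideal.mem_of_natCast_mul_mem i.add_one_ne_zero ?_
  have := I.sub_mem (I.mul_mem_left (D a) (hI _ hx)) (I.mul_mem_left (2 * k * D (D a)) hx)
  rwa [hDx, add_sub_cancel_right] at this

theorem pow_mul_map_sq_pow_mem (hI : ∀ x ∈ I, D x ∈ I) {a : R} :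
    ∀ k i : ℕ, a ^ (i + k) ∈ I → a ^ i * D a ^ (2 * k) ∈ I
  | 0, i, h => by simpa using h
  | k + 1, i, h =>
    D.pow_mul_map_sq_pow_mem_of_succ hI <|
      pow_mul_map_sq_pow_mem hI k (i + 1) (by rwa [add_right_comm, add_assoc])

theorem map_mem_radical (hI : ∀ x ∈ I, D x ∈ I) {a : R} (ha : a ∈ I.radical) :
    D a ∈ I.radical := by
  obtain ⟨n, hn⟩ := ha
  exact ⟨2 * n, by simpa using D.pow_mul_map_sq_pow_mem hI n 0 (by simpa using hn)⟩

end Derivation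

/-- If `R` is a commutative ring which is a `ℚ`-algebra, `D : R → R` is a derivation
(an additive map satisfying the Leibniz rule), and `I` is an ideal of `R` stable under `D`,
then the radical of `I` is also stable under `D`. -/
theorem radical_stable_under_derivation {R : Type*} [CommRing R] [Algebra ℚ R]
    (D : R → R)
    (hadd : ∀ x y : R, D (x + y) = D x + D y)
    (hleib : ∀ x y : R, D (x * y) = D x * y + x * D y)
    (I : Ideal R) (hI : ∀ x ∈ I, D x ∈ I)
    (a : R) (ha : a ∈ I.radical) : D a ∈ I.radical :=
  (Derivation.ofLeibniz D hadd hleib).map_mem_radical hI ha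
end

section
/- Let R be a commutative ring, ∂ : R → R a derivation, a ∈ R, and m a natural number. Then the m-fold iterate of ∂ applied to a^m satisfies ∂^m(a^m) − m!·(∂a)^m ∈ (a), where (a) denotes the ideal of R generated by a; that is, ∂^m(a^m) ≡ m!·(∂a)^m modulo the principal ideal generated by a. -/
/-!
Applying `D` to `a ^ (n + 1) * y` gives `(n + 1) * a ^ n * D a * y` modulo `a ^ (n + 1)`, and
maps multiples of `a ^ (n + 2)` to multiples of `a ^ (n + 1)`. Induction on `k` therefore gives
`D^[k] (a ^ (n + k)) ≡ (n + k) (n + k - 1) ⋯ (n + 1) · a ^ n · (D a) ^ k` modulo `a ^ (n + 1)`;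
the theorem is the case `n = 0`, once `D` is packaged as a `ℤ`-derivation.
-/

namespace Derivation

variable {R A : Type*} [CommSemiring R] [CommRing A] [Algebra R A] (D : Derivation R A A)

theorem apply_pow_succ_mul (a y : A) (n : ℕ) :
    D (a ^ (n + 1) * y) = a ^ n * ((n + 1) * D a * y + a * D y) := by
  rw [leibniz, leibniz_pow, Nat.add_sub_cancel, smul_eq_mul, smul_eq_mul, nsmul_eq_mul]
  push_cast
  ring

theorem pow_succ_dvd_apply_pow_succ_mul_sub (a y : A) (n : ℕ) :
    a ^ (n + 1) ∣ D (a ^ (n + 1) * y) - (n + 1) * a ^ n * D a * y :=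
  ⟨D y, by rw [apply_pow_succ_mul]; ring⟩

theorem pow_dvd_apply_of_pow_succ_dvd {a x : A} {n : ℕ} (h : a ^ (n + 1) ∣ x) :
    a ^ n ∣ D x := by
  obtain ⟨y, rfl⟩ := h
  rw [apply_pow_succ_mul]
  exact dvd_mul_right _ _

theorem pow_succ_dvd_iterate_pow_add_sub (a : A) (n k : ℕ) :
    a ^ (n + 1) ∣ D^[k] (a ^ (n + k)) - ((n + k).descFactorial k : A) * a ^ n * D a ^ k := by
  induction k generalizing n with
  | zero => simp
  | succ k ih =>
    obtain ⟨e, he⟩ := ih (n + 1)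
    set c : A := ((n + 1 + k).descFactorial k : A)
    have hiter : D^[k] (a ^ (n + 1 + k)) = a ^ (n + 1) * (c * D a ^ k) + a ^ (n + 1 + 1) * e := by
      linear_combination he
    have hc : ((n + 1 + k).descFactorial (k + 1) : A) = (n + 1) * c := by
      rw [Nat.descFactorial_succ, Nat.add_sub_cancel]
      push_cast; rfl
    rw [show n + (k + 1) = n + 1 + k by omega, Function.iterate_succ_apply', hiter, map_add, hc]
    have hleading := D.pow_succ_dvd_apply_pow_succ_mul_sub a (c * D a ^ k) n
    have hremainder := D.pow_dvd_apply_of_pow_succ_dvd (dvd_mul_right (a ^ (n + 1 + 1)) e)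
    convert dvd_add hleading hremainder using 1
    ring

end Derivation

/-- If `D : R → R` is a derivation on a commutative ring `R`, then for any `a : R` and
`m : ℕ` one has `D^[m] (a ^ m) ≡ m! • (D a) ^ m` modulo the principal ideal generated
by `a`. -/
theorem iterate_derivation_pow_sub_factorial_smul_mem_span {R : Type*} [CommRing R]
    (D : R → R)
    (hadd : ∀ x y : R, D (x + y) = D x + D y)
    (hleib : ∀ x y : R, D (x * y) = D x * y + x * D y)
    (a : R) (m : ℕ) :
    D^[m] (a ^ m) - m.factorial • (D a) ^ m ∈ Ideal.span ({a} : Set R) := by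
  let δ : Derivation ℤ R R :=
    .mk' (AddMonoidHom.mk' D hadd).toIntLinearMap fun x y => by
      simp [hleib, smul_eq_mul, mul_comm, add_comm]
  have key := δ.pow_succ_dvd_iterate_pow_add_sub a 0 m
  rw [Ideal.mem_span_singleton, nsmul_eq_mul]
  simpa [δ, Nat.descFactorial_self] using key
end

section
/- Let R be a commutative ring, ∂ : R → R a derivation, and I an ideal of R with ∂(I) ⊆ I. If a ∈ R satisfies a^m ∈ I for some natural number m, then m!·(∂a)^m ∈ √I, the radical of I. -/
/-!
If `a ^ (n + 1) * y ∈ I`, then `y * ∂(a ^ (n + 1) * y) - ∂y * (a ^ (n + 1) * y)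
= (n + 1) • ∂a * a ^ n * y ^ 2` lies in `I`: one factor of `a` is traded for squaring `y` and a
factor `(n + 1) • ∂a`. Starting from `a ^ m ∈ I` and repeating this `m` times gives
`a ^ (m - j) * (m.descFactorial j • (∂a) ^ j) ^ 2 ^ j ∈ I`, and at `j = m` this says
`(m! • (∂a) ^ m) ^ 2 ^ m ∈ I`.
-/

namespace Derivation

variable {A R : Type*} [CommSemiring A] [CommRing R] [Algebra A R]
  (d : Derivation A R R) {I : Ideal R}

def ofLeibniz_s2 (D : R → R) (hadd : ∀ x y : R, D (x + y) = D x + D y)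
    (hleib : ∀ x y : R, D (x * y) = D x * y + x * D y) : Derivation ℤ R R :=
  mk' (AddMonoidHom.mk' D hadd).toIntLinearMap fun x y => by
    simp only [AddMonoidHom.coe_toIntLinearMap, AddMonoidHom.mk'_apply, smul_eq_mul, hleib]
    ring

theorem pow_mul_smul_mul_sq_mem (hI : ∀ x ∈ I, d x ∈ I) {a y : R} {n : ℕ}
    (h : a ^ (n + 1) * y ∈ I) : a ^ n * ((n + 1) • d a * y ^ 2) ∈ I := by
  have key : a ^ n * ((n + 1) • d a * y ^ 2) =
      y * d (a ^ (n + 1) * y) - d y * (a ^ (n + 1) * y) := by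
    simp only [leibniz, leibniz_pow, Nat.add_sub_cancel, smul_eq_mul, nsmul_eq_mul]
    push_cast
    ring
  rw [key]
  exact I.sub_mem (I.mul_mem_left _ (hI _ h)) (I.mul_mem_left _ h)

theorem pow_mul_descFactorial_smul_pow_mem (hI : ∀ x ∈ I, d x ∈ I) {a : R} :
    ∀ {n j : ℕ}, a ^ (n + j) ∈ I →
      a ^ n * ((n + j).descFactorial j • d a ^ j) ^ 2 ^ j ∈ I
  | n, 0, h => by simpa using h
  | n, j + 1, h => by
    have ih := pow_mul_descFactorial_smul_pow_mem hI (n := n + 1) (j := j)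
      (by rwa [Nat.add_right_comm, add_assoc])
    refine I.mem_of_dvd ?_ (d.pow_mul_smul_mul_sq_mem hI ih)
    have hsucc : (n + (j + 1)).descFactorial (j + 1) • d a ^ (j + 1) =
        (n + 1) • d a * ((n + 1 + j).descFactorial j • d a ^ j) := by
      rw [show n + (j + 1) = n + 1 + j by omega, Nat.descFactorial_succ, Nat.add_sub_cancel,
        pow_succ', smul_mul_smul_comm]
    rw [hsucc, mul_pow, pow_succ 2 j, pow_mul (_ • d a ^ j)]
    exact mul_dvd_mul_left _ (mul_dvd_mul_right (dvd_pow_self _ (by positivity)) _)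

end Derivation

/-- If `D : R → R` is a derivation on a commutative ring `R`, `I` is an ideal of `R`
stable under `D`, and `a ^ m ∈ I` for some natural number `m`, then
`m! • (D a) ^ m` lies in the radical of `I`. -/
theorem factorial_smul_pow_mem_radical {R : Type*} [CommRing R]
    (D : R → R)
    (hadd : ∀ x y : R, D (x + y) = D x + D y)
    (hleib : ∀ x y : R, D (x * y) = D x * y + x * D y)
    (I : Ideal R) (hI : ∀ x ∈ I, D x ∈ I)
    (a : R) (m : ℕ) (ha : a ^ m ∈ I) :
    m.factorial • (D a) ^ m ∈ I.radical := by
  have h := (Derivation.ofLeibniz_s2 D hadd hleib).pow_mul_descFactorial_smul_pow_mem hI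
    (n := 0) (j := m) (by simpa using ha)
  rw [zero_add, Nat.descFactorial_self, pow_zero, one_mul] at h
  exact ⟨_, h⟩
end

section
/- Let R be a Poisson algebra that is a commutative ring and an algebra over ℚ, and let I be a Poisson ideal of R. Then the radical √I of I is also a Poisson ideal of R, i.e. for every a ∈ R and x ∈ √I one has {a, x} ∈ √I. -/
/-- If `R` is a Poisson algebra (a commutative ring which is a `ℚ`-algebra, equipped with
a bracket `B` that is additive in each argument, antisymmetric, satisfies the Jacobi
identity, and the Leibniz rule) and `I` is a Poisson ideal of `R`, then the radical of `I`
is also a Poisson ideal of `R`. -/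
theorem radical_of_poisson_ideal_is_poisson_ideal {R : Type*} [CommRing R] [Algebra ℚ R]
    (B : R → R → R)
    (hadd_left : ∀ a b c : R, B (a + b) c = B a c + B b c)
    (hadd_right : ∀ a b c : R, B a (b + c) = B a b + B a c)
    (hanti : ∀ a b : R, B a b = - B b a)
    (hjacobi : ∀ a b c : R, B a (B b c) + B b (B c a) + B c (B a b) = 0)
    (hleib : ∀ a b c : R, B a (b * c) = B a b * c + b * B a c)
    (I : Ideal R) (hI : ∀ a : R, ∀ x ∈ I, B a x ∈ I)
    (a : R) (x : R) (hx : x ∈ I.radical) : B a x ∈ I.radical := by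
  obtain ⟨n, hn⟩ := hx
  set y := B a x with hy
  -- B a 1 = 0
  have hone : B a 1 = 0 := by
    have := hleib a 1 1
    simp only [one_mul, mul_one] at this
    exact left_eq_add.mp this
  -- power rule
  have hpow : ∀ (z : R) (m : ℕ), B a (z ^ (m + 1)) = (m + 1 : R) * z ^ m * B a z := by
    intro z m
    induction m with
    | zero => simp
    | succ m ih =>
      rw [pow_succ, hleib, ih]
      push_cast
      ring
  -- division by positive naturals
  have hdiv : ∀ (c : ℕ) (u : R), 0 < c → (c : R) * u ∈ I → u ∈ I := by
    intro c u hc hcu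
    have key : algebraMap ℚ R ((c : ℚ)⁻¹) * ((c : R) * u) = u := by
      have hc0 : (c : ℚ) ≠ 0 := by exact_mod_cast hc.ne'
      have : ((c : R)) = algebraMap ℚ R (c : ℚ) := by
        simp
      rw [this, ← mul_assoc, ← map_mul, inv_mul_cancel₀ hc0, map_one, one_mul]
    rw [← key]
    exact I.mul_mem_left _ hcu
  -- main claim
  have main : ∀ k, k ≤ n → x ^ (n - k) * y ^ (2 * k) ∈ I := by
    intro k
    induction k with
    | zero => intro _; simpa using hn
    | succ k ih =>
      intro hk
      have hk' : k ≤ n := Nat.le_of_succ_le hk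
      have h1 := ih hk'
      set m := n - (k + 1) with hm
      have hnk : n - k = m + 1 := by omega
      rw [hnk] at h1
      have h2 := hI a _ h1
      -- compute B a (x^(m+1) * y^(2k)) * y
      have hcomp : B a (x ^ (m + 1) * y ^ (2 * k)) * y
          = (m + 1 : R) * (x ^ m * y ^ (2 * (k + 1)))
            + (2 * k * B a y) * (x ^ (m + 1) * y ^ (2 * k)) := by
        rw [hleib, hpow, ← hy]
        rcases Nat.eq_zero_or_pos k with hk0 | hk0
        · subst hk0
          simp only [Nat.mul_zero, pow_zero, hone, Nat.cast_zero]
          ring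
        · obtain ⟨j, rfl⟩ := Nat.exists_eq_succ_of_ne_zero hk0.ne'
          have e1 : 2 * (j + 1) = (2 * j + 1) + 1 := by ring
          have e2 : 2 * (j + 1 + 1) = ((2 * j + 1) + 1) + 1 + 1 := by ring
          rw [e1, e2, hpow]
          push_cast
          ring
      have h3 : B a (x ^ (m + 1) * y ^ (2 * k)) * y ∈ I := I.mul_mem_right _ h2
      rw [hcomp] at h3
      have h4 : (2 * (k : R) * B a y) * (x ^ (m + 1) * y ^ (2 * k)) ∈ I :=
        I.mul_mem_left _ h1
      have h5 : (m + 1 : R) * (x ^ m * y ^ (2 * (k + 1))) ∈ I := by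
        have := I.sub_mem h3 h4
        simpa using this
      have h6 : ((m + 1 : ℕ) : R) * (x ^ m * y ^ (2 * (k + 1))) ∈ I := by
        push_cast
        exact h5
      exact hdiv (m + 1) _ (Nat.succ_pos m) h6
  refine ⟨2 * n, ?_⟩
  have := main n le_rfl
  simpa using this
end

section
/- Let R be a Poisson algebra that is a commutative ring and an algebra over ℚ, let M be an R-module, and suppose given for each a ∈ R an additive map L_a : M → M satisfying L_a(b • m) = {a,b} • m + b • L_a(m) for all a, b ∈ R and m ∈ M. Then the radical of the annihilator, √(Ann_R(M)), is a Poisson ideal of R: for every a ∈ R and x ∈ √(Ann_R(M)) one has {a, x} ∈ √(Ann_R(M)). -/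
/-- Let `R` be a Poisson algebra (a commutative ring which is a `ℚ`-algebra, equipped
with a bracket `B` that is additive in each argument, antisymmetric, satisfies the Jacobi
identity, and the Leibniz rule), let `M` be an `R`-module, and suppose for each `a : R`
an additive map `L a : M → M` is given such that `L a (b • m) = B a b • m + b • L a m`.
Then the radical of the annihilator of `M` is a Poisson ideal of `R`. -/
theorem radical_annihilator_is_poisson_ideal {R M : Type*} [CommRing R] [Algebra ℚ R]
    [AddCommGroup M] [Module R M]
    (B : R → R → R)
    (hadd_left : ∀ a b c : R, B (a + b) c = B a c + B b c)
    (hadd_right : ∀ a b c : R, B a (b + c) = B a b + B a c)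
    (hanti : ∀ a b : R, B a b = - B b a)
    (hjacobi : ∀ a b c : R, B a (B b c) + B b (B c a) + B c (B a b) = 0)
    (hleib : ∀ a b c : R, B a (b * c) = B a b * c + b * B a c)
    (L : R → M → M)
    (hLadd : ∀ (a : R) (m m' : M), L a (m + m') = L a m + L a m')
    (hLcomp : ∀ (a b : R) (m : M), L a (b • m) = B a b • m + b • L a m)
    (a x : R) (hx : x ∈ (Module.annihilator R M).radical) :
    B a x ∈ (Module.annihilator R M).radical := by
  set I := Module.annihilator R M with hIdef
  set d : R → R := B a with hddef
  -- L a 0 = 0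
  have hL0 : L a 0 = 0 := by
    have h := hLadd a 0 0
    rw [add_zero] at h
    exact left_eq_add.mp h
  -- d 1 = 0
  have hd1 : d (1 : R) = 0 := by
    have h := hleib a 1 1
    simp only [one_mul, mul_one] at h
    exact left_eq_add.mp h
  -- d maps I into I
  have hI : ∀ y ∈ I, d y ∈ I := by
    intro y hy
    rw [hIdef, Module.mem_annihilator]
    intro m
    have h1 : L a (y • m) = d y • m + y • L a m := hLcomp a y m
    have h2 : y • m = 0 := Module.mem_annihilator.mp hy m
    have h3 : y • L a m = 0 := Module.mem_annihilator.mp hy (L a m)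
    rw [h2, hL0, h3, add_zero] at h1
    exact h1.symm
  -- divide by a positive natural
  have hdiv : ∀ (m : ℕ) (c : R), m ≠ 0 → (m : R) * c ∈ I → c ∈ I := by
    intro m c hm hc
    have h1 : algebraMap ℚ R ((m : ℚ)⁻¹) * (m : R) = 1 := by
      rw [show ((m : R)) = algebraMap ℚ R (m : ℚ) by simp, ← map_mul,
        inv_mul_cancel₀ (by exact_mod_cast hm)]
      simp
    have h2 : c = algebraMap ℚ R ((m : ℚ)⁻¹) * ((m : R) * c) := by
      rw [← mul_assoc, h1, one_mul]
    rw [h2]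
    exact Ideal.mul_mem_left I _ hc
  -- d of a power
  have hdpow : ∀ (k : ℕ) (y : R), d (y ^ (k + 1)) = (k + 1 : ℕ) * (y ^ k * d y) := by
    intro k y
    induction k with
    | zero => simp [hddef]
    | succ k ih =>
      simp only [hddef] at ih ⊢
      rw [pow_succ, hleib, ih]
      push_cast
      ring
  obtain ⟨n, hn⟩ := Ideal.mem_radical_iff.mp hx
  -- key claim
  have key : ∀ k : ℕ, k ≤ n → x ^ (n - k) * d x ^ (2 * k) ∈ I := by
    intro k hk
    induction k with
    | zero => simpa using hn
    | succ k ih =>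
      have hkn : k < n := hk
      have ih' := ih (le_of_lt hkn)
      have h1 : d (x ^ (n - k) * d x ^ (2 * k)) ∈ I := hI _ ih'
      have h2 : d (x ^ (n - k) * d x ^ (2 * k)) =
          d (x ^ (n - k)) * d x ^ (2 * k) + x ^ (n - k) * d (d x ^ (2 * k)) := hleib a _ _
      have hnk : n - k = (n - (k + 1)) + 1 := by omega
      have e1 : d (x ^ (n - k)) = ((n - (k + 1) : ℕ) + 1 : ℕ) * (x ^ (n - (k + 1)) * d x) := by
        rw [hnk]; exact hdpow _ x
      have h3 : d (x ^ (n - k) * d x ^ (2 * k)) * d x ∈ I := Ideal.mul_mem_right _ I h1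
      rw [h2, add_mul, e1] at h3
      -- second summand is in I
      have hsecond : x ^ (n - k) * d (d x ^ (2 * k)) * d x ∈ I := by
        cases k with
        | zero =>
          simp only [Nat.mul_zero, pow_zero, hd1, mul_zero, zero_mul]
          exact I.zero_mem
        | succ k' =>
          obtain ⟨j, hj⟩ : ∃ j, 2 * (k' + 1) = j + 1 := ⟨2 * (k' + 1) - 1, by omega⟩
          have e2 : d (d x ^ (2 * (k' + 1))) = (j + 1 : ℕ) * (d x ^ j * d (d x)) := by
            rw [hj]; exact hdpow _ (d x)
          rw [e2]
          have hfac : x ^ (n - (k' + 1)) * ((j + 1 : ℕ) * (d x ^ j * d (d x))) * d x =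
              (x ^ (n - (k' + 1)) * d x ^ (2 * (k' + 1))) * ((j + 1 : ℕ) * d (d x)) := by
            rw [hj, pow_succ]
            ring
          rw [hfac]
          exact Ideal.mul_mem_right _ I ih'
      have hA : ((n - (k + 1) : ℕ) + 1 : ℕ) * (x ^ (n - (k + 1)) * d x) * d x ^ (2 * k) * d x
          ∈ I := by
        have h4 := I.sub_mem h3 hsecond
        rwa [add_sub_cancel_right] at h4
      have heq : ((n - (k + 1) : ℕ) + 1 : ℕ) * (x ^ (n - (k + 1)) * d x) * d x ^ (2 * k) * d x =
          (((n - (k + 1) : ℕ) + 1 : ℕ) : R) * (x ^ (n - (k + 1)) * d x ^ (2 * (k + 1))) := by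
        rw [show 2 * (k + 1) = 2 * k + 1 + 1 by omega, pow_succ, pow_succ]
        ring
      rw [heq] at hA
      exact hdiv _ _ (by omega) hA
  have hfin := key n le_rfl
  simp only [Nat.sub_self, pow_zero, one_mul] at hfin
  exact Ideal.mem_radical_iff.mpr ⟨2 * n, hfin⟩
end
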